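/- The dimension of the stabilizer of N_γ = E_{l,1} − E_{2l,(l+1)} in the Borel subgroup B of upper-triangular invertible 2l×2l matrices acting by conjugation equals (2l−1)(l−2) + 4, hence dim B·N_γ = 6(l−1). -/

import Mathlib

open Matrix

/-- The subspace of upper-triangular matrices commuting with a given matrix `M`. -/
noncomputable def commTriang (n : ℕ) (M : Matrix (Fin n) (Fin n) ℂ) :
    Submodule ℂ (Matrix (Fin n) (Fin n) ℂ) where
  carrier := {x | x.BlockTriangular id ∧ x * M = M * x}
  add_mem' := by
    rintro x y ⟨hx1, hx2⟩ ⟨hy1, hy2⟩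
    refine ⟨fun i j h => ?_, by rw [add_mul, mul_add, hx2, hy2]⟩
    simp [Matrix.add_apply, hx1 h, hy1 h]
  zero_mem' := ⟨fun i j h => rfl, by simp⟩
  smul_mem' := by
    rintro c x ⟨hx1, hx2⟩
    refine ⟨fun i j h => ?_, ?_⟩
    · simp [Matrix.smul_apply, hx1 h]
    · rw [smul_mul_assoc, hx2, mul_smul_comm]

namespace DimStabAux

/-- The set of "free" coordinates. -/
def Q (l i j : ℕ) : Prop :=
  (i ≤ j ∧ i ≠ 0 ∧ i ≠ l ∧ j ≠ l - 1 ∧ j ≠ 2 * l - 1) ∨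
    (i = 0 ∧ j = 0) ∨ (i = 0 ∧ j = l) ∨ (i = l ∧ j = l)

instance (l i j : ℕ) : Decidable (Q l i j) := by unfold Q; infer_instance

lemma mem_commTriang {n : ℕ} {M : Matrix (Fin n) (Fin n) ℂ}
    {x : Matrix (Fin n) (Fin n) ℂ} :
    x ∈ commTriang n M ↔ x.BlockTriangular id ∧ x * M = M * x := Iff.rfl

lemma card_filter_val (n : ℕ) (q : ℕ → Prop) [DecidablePred q] :
    ((Finset.univ : Finset (Fin n)).filter fun j => q j.val).card
      = ((Finset.range n).filter q).card := by
  conv_rhs => rw [← Nat.Iio_eq_range, ← Fin.map_valEmbedding_univ,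
    Finset.filter_map, Finset.card_map]
  rfl

lemma row_count (l : ℕ) (hl : 2 ≤ l) (i : ℕ) (hi : i < 2 * l) :
    ((Finset.range (2 * l)).filter (Q l i)).card =
      if i = 0 then 2 else if i = l then 1 else
        if i < l then 2 * l - i - 2 else 2 * l - i - 1 := by
  by_cases h0 : i = 0
  · subst h0
    rw [show (Finset.range (2 * l)).filter (Q l 0) = {0, l} from by
      ext j; simp only [Finset.mem_filter, Finset.mem_range, Finset.mem_insert,
        Finset.mem_singleton]; unfold Q; omega]
    rw [Finset.card_insert_of_notMem (by simp only [Finset.mem_singleton]; omega),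
      Finset.card_singleton]
    simp
  · by_cases hL : i = l
    · rw [show (Finset.range (2 * l)).filter (Q l i) = {l} from by
        ext j; simp only [Finset.mem_filter, Finset.mem_range, Finset.mem_singleton]; unfold Q; omega]
      rw [if_neg h0, if_pos hL, Finset.card_singleton]
    · by_cases hlt : i < l
      · rw [show (Finset.range (2 * l)).filter (Q l i) =
            ((Finset.Ico i (2 * l)).erase (l - 1)).erase (2 * l - 1) from by
          ext j; simp only [Finset.mem_filter, Finset.mem_range, Finset.mem_erase,
            Finset.mem_Ico]; unfold Q; omega]
        rw [Finset.card_erase_of_mem (by simp only [Finset.mem_erase, Finset.mem_Ico]; omega),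
          Finset.card_erase_of_mem (by simp only [Finset.mem_Ico]; omega), Nat.card_Ico]
        rw [if_neg h0, if_neg hL, if_pos hlt]
        omega
      · rw [show (Finset.range (2 * l)).filter (Q l i) =
            (Finset.Ico i (2 * l)).erase (2 * l - 1) from by
          ext j; simp only [Finset.mem_filter, Finset.mem_range, Finset.mem_erase,
            Finset.mem_Ico]; unfold Q; omega]
        rw [Finset.card_erase_of_mem (by simp only [Finset.mem_Ico]; omega), Nat.card_Ico]
        rw [if_neg h0, if_neg hL, if_neg hlt]

lemma total' (m : ℕ) :
    (∑ i ∈ Finset.range (2 * (m + 2)),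
      (if i = 0 then 2 else if i = m + 2 then 1 else
        if i < m + 2 then 2 * (m + 2) - i - 2 else 2 * (m + 2) - i - 1))
      = (2 * (m + 2) - 1) * ((m + 2) - 2) + 4 := by
  have hS : (∑ i ∈ Finset.range (m + 1), i) + (∑ i ∈ Finset.range (m + 1), i)
      = (m + 1) * m := by
    calc (∑ i ∈ Finset.range (m + 1), i) + (∑ i ∈ Finset.range (m + 1), i)
        = (∑ i ∈ Finset.range (m + 1), i) * 2 := by ring
      _ = (m + 1) * ((m + 1) - 1) := Finset.sum_range_id_mul_two (m + 1)
      _ = (m + 1) * m := by rw [Nat.add_sub_cancel]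
  rw [show 2 * (m + 2) = (m + 2) + (m + 2) from by ring, Finset.sum_range_add]
  have h1 : (∑ i ∈ Finset.range (m + 2),
      (if i = 0 then 2 else if i = m + 2 then 1 else
        if i < m + 2 then m + 2 + (m + 2) - i - 2 else m + 2 + (m + 2) - i - 1))
      = (m + 1) * (m + 1) + (∑ i ∈ Finset.range (m + 1), i) + 2 := by
    rw [show m + 2 = (m + 1) + 1 from rfl, Finset.sum_range_succ' _ (m + 1)]
    have e1 : (∑ i ∈ Finset.range (m + 1),
        (if i + 1 = 0 then 2 else if i + 1 = m + 1 + 1 then 1 else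
          if i + 1 < m + 1 + 1 then m + 1 + 1 + (m + 1 + 1) - (i + 1) - 2
          else m + 1 + 1 + (m + 1 + 1) - (i + 1) - 1))
        = ∑ i ∈ Finset.range (m + 1), (2 * m + 1 - i) := by
      refine Finset.sum_congr rfl fun i hi => ?_
      rw [Finset.mem_range] at hi
      split_ifs <;> first | omega | exact (False.elim ‹False›)
    rw [e1, ← Finset.sum_range_reflect (fun i => 2 * m + 1 - i) (m + 1)]
    rw [Finset.sum_congr rfl (fun i hi => show 2 * m + 1 - (m + 1 - 1 - i) = m + 1 + i from by
      rw [Finset.mem_range] at hi; omega)]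
    rw [Finset.sum_add_distrib, Finset.sum_const, Finset.card_range, smul_eq_mul]
    norm_num
  have h2 : (∑ i ∈ Finset.range (m + 2),
      (if m + 2 + i = 0 then 2 else if m + 2 + i = m + 2 then 1 else
        if m + 2 + i < m + 2 then m + 2 + (m + 2) - (m + 2 + i) - 2
        else m + 2 + (m + 2) - (m + 2 + i) - 1))
      = (∑ i ∈ Finset.range (m + 1), i) + 1 := by
    rw [show m + 2 = (m + 1) + 1 from rfl, Finset.sum_range_succ' _ (m + 1)]
    have e2 : (∑ i ∈ Finset.range (m + 1),
        (if m + 1 + 1 + (i + 1) = 0 then 2 else if m + 1 + 1 + (i + 1) = m + 1 + 1 then 1 else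
          if m + 1 + 1 + (i + 1) < m + 1 + 1 then
            m + 1 + 1 + (m + 1 + 1) - (m + 1 + 1 + (i + 1)) - 2
          else m + 1 + 1 + (m + 1 + 1) - (m + 1 + 1 + (i + 1)) - 1))
        = ∑ i ∈ Finset.range (m + 1), (m - i) := by
      refine Finset.sum_congr rfl fun i hi => ?_
      rw [Finset.mem_range] at hi
      split_ifs <;> first | omega | exact (False.elim ‹False›)
    rw [e2, ← Finset.sum_range_reflect (fun i => m - i) (m + 1)]
    rw [Finset.sum_congr rfl (fun i hi => show m - (m + 1 - 1 - i) = i from by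
      rw [Finset.mem_range] at hi; omega)]
    norm_num
  rw [h1, h2, show m + 2 + (m + 2) - 1 = 2 * m + 3 from by omega,
    show m + 2 - 2 = m from by omega]
  calc (m + 1) * (m + 1) + (∑ i ∈ Finset.range (m + 1), i) + 2
        + ((∑ i ∈ Finset.range (m + 1), i) + 1)
      = (m + 1) * (m + 1)
        + ((∑ i ∈ Finset.range (m + 1), i) + (∑ i ∈ Finset.range (m + 1), i)) + 3 := by ring
    _ = (m + 1) * (m + 1) + (m + 1) * m + 3 := by rw [hS]
    _ = (2 * m + 3) * m + 4 := by ring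

lemma total (l : ℕ) (hl : 2 ≤ l) :
    (∑ i : Fin (2 * l), ((Finset.range (2 * l)).filter (Q l i.val)).card)
      = (2 * l - 1) * (l - 2) + 4 := by
  obtain ⟨m, rfl⟩ : ∃ m, l = m + 2 := ⟨l - 2, by omega⟩
  rw [Fin.sum_univ_eq_sum_range (fun i => ((Finset.range (2 * (m + 2))).filter
    (Q (m + 2) i)).card) (2 * (m + 2))]
  rw [Finset.sum_congr rfl fun i hi =>
    row_count (m + 2) hl i (Finset.mem_range.mp hi)]
  exact total' m

lemma card_S (l : ℕ) (hl : 2 ≤ l) :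
    Fintype.card {p : Fin (2 * l) × Fin (2 * l) // Q l p.1.val p.2.val}
      = (2 * l - 1) * (l - 2) + 4 := by
  rw [Fintype.card_congr
    (Equiv.subtypeProdEquivSigmaSubtype fun i j : Fin (2 * l) => Q l i.val j.val)]
  rw [Fintype.card_sigma]
  rw [Finset.sum_congr rfl fun i _ => (Fintype.card_subtype _).trans (card_filter_val _ _)]
  exact total l hl

lemma entry_eq {n : ℕ} (a b c d : Fin n) (x : Matrix (Fin n) (Fin n) ℂ) :
    x * (single a b 1 - single c d 1)
      = (single a b 1 - single c d 1) * x ↔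
    ∀ i j, (if j = b then x i a else 0) - (if j = d then x i c else 0)
      = (if i = a then x b j else 0) - (if i = c then x d j else 0) := by
  have hL : ∀ i j, ((x * (single a b 1 - single c d 1) :
      Matrix (Fin n) (Fin n) ℂ)) i j
      = (if j = b then x i a else 0) - (if j = d then x i c else 0) := by
    intro i j
    rw [Matrix.mul_sub, Matrix.sub_apply]
    congr 1
    · by_cases h : j = b
      · subst h; rw [Matrix.mul_single_apply_same, mul_one, if_pos rfl]
      · rw [Matrix.mul_single_apply_of_ne (hbj := h) (M := x), if_neg h]
    · by_cases h : j = d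
      · subst h; rw [Matrix.mul_single_apply_same, mul_one, if_pos rfl]
      · rw [Matrix.mul_single_apply_of_ne (hbj := h) (M := x), if_neg h]
  have hR : ∀ i j, (((single a b 1 - single c d 1) * x :
      Matrix (Fin n) (Fin n) ℂ)) i j
      = (if i = a then x b j else 0) - (if i = c then x d j else 0) := by
    intro i j
    rw [Matrix.sub_mul, Matrix.sub_apply]
    congr 1
    · by_cases h : i = a
      · subst h; rw [Matrix.single_mul_apply_same, one_mul, if_pos rfl]
      · rw [Matrix.single_mul_apply_of_ne (h := h) (M := x), if_neg h]
    · by_cases h : i = c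
      · subst h; rw [Matrix.single_mul_apply_same, one_mul, if_pos rfl]
      · rw [Matrix.single_mul_apply_of_ne (h := h) (M := x), if_neg h]
  constructor
  · intro h i j
    rw [← hL, ← hR, h]
  · intro h
    ext i j
    rw [hL, hR]
    exact h i j

set_option maxHeartbeats 1000000 in
lemma finrank_comm (l : ℕ) (hl : 2 ≤ l) (a b c d : Fin (2 * l))
    (ha : (a : ℕ) = l - 1) (hb : (b : ℕ) = 0) (hc : (c : ℕ) = 2 * l - 1)
    (hd : (d : ℕ) = l) :
    Module.finrank ℂ (commTriang (2 * l) (single a b 1 - single c d 1))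
      = Fintype.card {p : Fin (2 * l) × Fin (2 * l) // Q l p.1.val p.2.val} := by
  have hbd : b ≠ d := fun h => by rw [Fin.ext_iff, hb, hd] at h; omega
  have hac : a ≠ c := fun h => by rw [Fin.ext_iff, ha, hc] at h; omega
  have hQbb : Q l b.val b.val := by rw [hb]; unfold Q; omega
  have hQbd : Q l b.val d.val := by rw [hb, hd]; unfold Q; omega
  have hQdd : Q l d.val d.val := by rw [hd]; unfold Q; omega
  let π : commTriang (2 * l) (single a b 1 - single c d 1) →ₗ[ℂ]
      ({p : Fin (2 * l) × Fin (2 * l) // Q l p.1.val p.2.val} → ℂ) :=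
    { toFun := fun x p => (x : Matrix (Fin (2 * l)) (Fin (2 * l)) ℂ) p.1.1 p.1.2
      map_add' := fun x y => rfl
      map_smul' := fun r x => rfl }
  have hinj : Function.Injective π := by
    rw [← LinearMap.ker_eq_bot, LinearMap.ker_eq_bot']
    rintro ⟨x, htri, hcomm⟩ hz0
    have hz : ∀ i j : Fin (2 * l), Q l i.val j.val → x i j = 0 := fun i j hq => by
      exact congrFun hz0 ⟨(i, j), hq⟩
    have E := (entry_eq a b c d x).mp hcomm
    apply Subtype.ext
    show x = 0
    ext i j
    simp only [Matrix.zero_apply]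
    by_cases hij : (j : ℕ) < i
    · exact htri (show (id j : Fin _) < id i from hij)
    push_neg at hij
    by_cases hi0 : (i : ℕ) = 0
    · have hib : i = b := Fin.ext (by rw [hi0, hb])
      by_cases hj : (j : ℕ) = 0 ∨ (j : ℕ) = l
      · exact hz i j (by unfold Q; omega)
      · push_neg at hj
        have hjb : j ≠ b := fun h => by subst h; omega
        have hjd : j ≠ d := fun h => by subst h; omega
        have e := E a j
        rw [if_neg hjb, if_neg hjd, if_pos rfl, if_neg hac] at e
        rw [hib]
        simpa using e.symm
    by_cases hil : (i : ℕ) = l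
    · have hid : i = d := Fin.ext (by rw [hil, hd])
      by_cases hj : (j : ℕ) = l
      · exact hz i j (by unfold Q; omega)
      · have hjb : j ≠ b := fun h => by subst h; omega
        have hjd : j ≠ d := fun h => by subst h; omega
        have e := E c j
        rw [if_neg hjb, if_neg hjd, if_neg (fun h : c = a => hac h.symm), if_pos rfl] at e
        rw [hid]
        simpa using e.symm
    by_cases hj1 : (j : ℕ) = l - 1
    · have hja : j = a := Fin.ext (by rw [hj1, ha])
      have hdb : x d b = 0 := htri (show (id b : Fin _) < id d from by
        simp only [id_eq, Fin.lt_def, hb, hd]; omega)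
      have e := E i b
      rw [if_pos rfl, if_neg hbd, hz b b hQbb, hdb] at e
      simp only [ite_self, sub_zero, sub_self] at e
      rw [hja]
      simpa using e
    by_cases hj2 : (j : ℕ) = 2 * l - 1
    · have hjc : j = c := Fin.ext (by rw [hj2, hc])
      have e := E i d
      rw [if_neg (fun h : d = b => hbd h.symm), if_pos rfl, hz b d hQbd, hz d d hQdd] at e
      rw [hjc]
      simp only [ite_self, zero_sub, sub_zero, neg_eq_zero] at e
      exact e
    · exact hz i j (by unfold Q; omega)
  have hsurj : Function.Surjective π := by
    intro f
    set x : Matrix (Fin (2 * l)) (Fin (2 * l)) ℂ := fun i j =>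
      if h : Q l i.val j.val then f ⟨(i, j), h⟩
      else if (i : ℕ) = l - 1 ∧ (j : ℕ) = l - 1 then f ⟨(b, b), hQbb⟩
      else if (i : ℕ) = l - 1 ∧ (j : ℕ) = 2 * l - 1 then -f ⟨(b, d), hQbd⟩
      else if (i : ℕ) = 2 * l - 1 ∧ (j : ℕ) = 2 * l - 1 then f ⟨(d, d), hQdd⟩
      else 0 with hx
    have hxa : ∀ i, x i a = if i = a then f ⟨(b, b), hQbb⟩ else 0 := by
      intro i
      simp only [hx]
      rw [dif_neg (show ¬ Q l i.val a.val by rw [ha]; unfold Q; omega)]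
      by_cases hi : i = a
      · rw [if_pos ⟨by rw [hi]; exact ha, ha⟩, if_pos hi]
      · have hi' : (i : ℕ) ≠ (a : ℕ) := fun h => hi (Fin.ext h)
        rw [if_neg (show ¬((i : ℕ) = l - 1 ∧ (a : ℕ) = l - 1) by omega),
          if_neg (show ¬((i : ℕ) = l - 1 ∧ (a : ℕ) = 2 * l - 1) by omega),
          if_neg (show ¬((i : ℕ) = 2 * l - 1 ∧ (a : ℕ) = 2 * l - 1) by omega),
          if_neg hi]
    have hxc : ∀ i, x i c = if i = a then -f ⟨(b, d), hQbd⟩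
        else if i = c then f ⟨(d, d), hQdd⟩ else 0 := by
      intro i
      simp only [hx]
      rw [dif_neg (show ¬ Q l i.val c.val by rw [hc]; unfold Q; omega)]
      by_cases hi : i = a
      · rw [if_neg (show ¬((i : ℕ) = l - 1 ∧ (c : ℕ) = l - 1) by omega),
          if_pos ⟨by rw [hi]; exact ha, hc⟩, if_pos hi]
      · have hi' : (i : ℕ) ≠ (a : ℕ) := fun h => hi (Fin.ext h)
        by_cases hic : i = c
        · have hic' : (i : ℕ) = (c : ℕ) := by rw [hic]
          rw [if_neg (show ¬((i : ℕ) = l - 1 ∧ (c : ℕ) = l - 1) by omega),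
            if_neg (show ¬((i : ℕ) = l - 1 ∧ (c : ℕ) = 2 * l - 1) by omega),
            if_pos ⟨by rw [hic]; exact hc, hc⟩, if_neg hi, if_pos hic]
        · have hic' : (i : ℕ) ≠ (c : ℕ) := fun h => hic (Fin.ext h)
          rw [if_neg (show ¬((i : ℕ) = l - 1 ∧ (c : ℕ) = l - 1) by omega),
            if_neg (show ¬((i : ℕ) = l - 1 ∧ (c : ℕ) = 2 * l - 1) by omega),
            if_neg (show ¬((i : ℕ) = 2 * l - 1 ∧ (c : ℕ) = 2 * l - 1) by omega),
            if_neg hi, if_neg hic]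
    have hxb : ∀ j, x b j = if j = b then f ⟨(b, b), hQbb⟩
        else if j = d then f ⟨(b, d), hQbd⟩ else 0 := by
      intro j
      simp only [hx]
      by_cases hjb : j = b
      · subst hjb
        rw [dif_pos hQbb, if_pos rfl]
      · have hjb' : (j : ℕ) ≠ (b : ℕ) := fun h => hjb (Fin.ext h)
        by_cases hjd : j = d
        · subst hjd
          rw [dif_pos hQbd, if_neg (fun h : j = b => hjb h), if_pos rfl]
        · have hjd' : (j : ℕ) ≠ (d : ℕ) := fun h => hjd (Fin.ext h)
          rw [dif_neg (show ¬ Q l b.val j.val by rw [hb]; unfold Q; omega),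
            if_neg (show ¬((b : ℕ) = l - 1 ∧ (j : ℕ) = l - 1) by omega),
            if_neg (show ¬((b : ℕ) = l - 1 ∧ (j : ℕ) = 2 * l - 1) by omega),
            if_neg (show ¬((b : ℕ) = 2 * l - 1 ∧ (j : ℕ) = 2 * l - 1) by omega),
            if_neg hjb, if_neg hjd]
    have hxd : ∀ j, x d j = if j = d then f ⟨(d, d), hQdd⟩ else 0 := by
      intro j
      simp only [hx]
      by_cases hjd : j = d
      · subst hjd
        rw [dif_pos hQdd, if_pos rfl]
      · have hjd' : (j : ℕ) ≠ (d : ℕ) := fun h => hjd (Fin.ext h)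
        rw [dif_neg (show ¬ Q l d.val j.val by rw [hd]; unfold Q; omega),
          if_neg (show ¬((d : ℕ) = l - 1 ∧ (j : ℕ) = l - 1) by omega),
          if_neg (show ¬((d : ℕ) = l - 1 ∧ (j : ℕ) = 2 * l - 1) by omega),
          if_neg (show ¬((d : ℕ) = 2 * l - 1 ∧ (j : ℕ) = 2 * l - 1) by omega),
          if_neg hjd]
    have htri : x.BlockTriangular id := by
      intro i j hij
      have hij' : (j : ℕ) < (i : ℕ) := hij
      simp only [hx]
      rw [dif_neg (show ¬ Q l i.val j.val by unfold Q; omega),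
        if_neg (show ¬((i : ℕ) = l - 1 ∧ (j : ℕ) = l - 1) by omega),
        if_neg (show ¬((i : ℕ) = l - 1 ∧ (j : ℕ) = 2 * l - 1) by omega),
        if_neg (show ¬((i : ℕ) = 2 * l - 1 ∧ (j : ℕ) = 2 * l - 1) by omega)]
    have hcomm : ∀ i j, (if j = b then x i a else 0) - (if j = d then x i c else 0)
        = (if i = a then x b j else 0) - (if i = c then x d j else 0) := by
      intro i j
      rw [hxa i, hxc i, hxb j, hxd j]
      by_cases hjb : j = b <;> by_cases hjd : j = d <;>
        by_cases hia : i = a <;> by_cases hic : i = c <;>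
        simp only [hjb, hjd, hia, hic, if_pos rfl, if_true, if_false, if_neg hbd,
          if_neg hac, if_neg (show b ≠ d from hbd), if_neg (show a ≠ c from hac),
          if_neg (show d ≠ b from fun h => hbd h.symm),
          if_neg (show c ≠ a from fun h => hac h.symm)] <;>
        first
          | ring
          | (exact absurd (hjb.symm.trans hjd) hbd)
          | (exact absurd (hia.symm.trans hic) hac)
          | simp_all
    refine ⟨⟨x, htri, (entry_eq a b c d x).mpr hcomm⟩, ?_⟩
    funext p
    obtain ⟨⟨i, j⟩, hp⟩ := p
    show x i j = f ⟨(i, j), hp⟩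
    simp only [hx]
    rw [dif_pos hp]
  rw [LinearEquiv.finrank_eq (LinearEquiv.ofBijective π ⟨hinj, hsurj⟩),
    Module.finrank_fintype_fun_eq_card]

end DimStabAux

/-- The stabilizer of `N_γ = E_{l,1} − E_{2l,l+1}` in the Borel of upper-triangular
invertible `2l×2l` matrices has dimension `(2l−1)(l−2)+4`; hence, since
`dim B = l(2l+1)`, the orbit `B·N_γ` has dimension `6(l−1)`. -/
theorem dim_stab_Ngamma (l : ℕ) (hl : 2 ≤ l) :
    let N : Matrix (Fin (2 * l)) (Fin (2 * l)) ℂ :=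
      single ⟨l - 1, by omega⟩ ⟨0, by omega⟩ 1 -
        single ⟨2 * l - 1, by omega⟩ ⟨l, by omega⟩ 1
    Module.finrank ℂ (commTriang (2 * l) N) = (2 * l - 1) * (l - 2) + 4 ∧
      l * (2 * l + 1) - ((2 * l - 1) * (l - 2) + 4) = 6 * (l - 1) := by
  intro N
  refine ⟨?_, ?_⟩
  · rw [show N = single ⟨l - 1, by omega⟩ ⟨0, by omega⟩ 1 -
        single ⟨2 * l - 1, by omega⟩ ⟨l, by omega⟩ 1 from rfl]
    rw [DimStabAux.finrank_comm l hl ⟨l - 1, by omega⟩ ⟨0, by omega⟩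
        ⟨2 * l - 1, by omega⟩ ⟨l, by omega⟩ rfl rfl rfl rfl,
      DimStabAux.card_S l hl]
  · obtain ⟨m, rfl⟩ : ∃ m, l = m + 2 := ⟨l - 2, by omega⟩
    rw [show 2 * (m + 2) - 1 = 2 * m + 3 from by omega,
      show (m + 2) - 2 = m from by omega, show (m + 2) - 1 = m + 1 from by omega]
    rw [show (m + 2) * (2 * (m + 2) + 1) = (2 * m + 3) * m + 4 + 6 * (m + 1) from by ring]
    rw [Nat.add_sub_cancel_left]
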